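/- arXiv:2309.06925 — 2 statements merged into one kernel-verified Lean document; each statement's English description precedes it below -/
import Mathlib

section
/- 8 ζ(1, 2̄) = ζ(3), i.e., 8 ∑_{0<k1<k2} (-1)^{k2} / (k1 k2^2) = ∑_{k≥1} 1/k^3. -/
open Finset Filter Topology

/-!
Put `T(a, b) = 1 / (a b (a + b))` for `a, b ≥ 1` and sum `∑ ε(a, b) T(a, b)` for sign weights `ε`
in two ways. Along a row, `1 / (b (a + b)) = (1 / b - 1 / (a + b)) / a` telescopes, giving
`H_a / a²`; along a diagonal `a + b = n`, `T(a, b) = (1 / a + 1 / b) / n²` gives `2 H_{n-1} / n²`.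
For `ε = 1` this is Euler's `∑ H_{n-1} / n² = ζ(3)` and yields `∑ T = 2 ζ(3)`. For `ε = (-1)^a`
rows give `ζ(1, 2̄) = ∑ (-1)^a T + (3/4) ζ(3)`, and for `ε = (-1)^(a+b)` diagonals give
`2 ζ(1, 2̄) = ∑ (-1)^(a+b) T`. Finally `T(2a, 2b) = T(a, b) / 8`, so the weight
`(1 + (-1)^a)(1 + (-1)^b)`, which is `4` on even pairs and `0` otherwise, gives
`∑ T / 2 = ∑ T + 2 ∑ (-1)^a T + ∑ (-1)^(a+b) T`, a linear relation that determines `ζ(1, 2̄)`.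
-/

lemma harmonic_eq_sum_range_one_div (n : ℕ) :
    (harmonic n : ℝ) = ∑ k ∈ range n, 1 / ((k : ℝ) + 1) := by
  simp [harmonic]

lemma harmonic_succ_div_sq (n : ℕ) :
    (harmonic (n + 1) : ℝ) / ((n : ℝ) + 1) ^ 2 =
      harmonic n / ((n : ℝ) + 1) ^ 2 + 1 / ((n : ℝ) + 1) ^ 3 := by
  rw [harmonic_succ]
  push_cast
  field_simp

lemma summable_one_div_add_one_pow {s : ℕ} (hs : 1 < s) :
    Summable fun n : ℕ ↦ 1 / ((n : ℝ) + 1) ^ s := by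
  simpa using (summable_nat_add_iff 1).2 (Real.summable_one_div_nat_pow.2 hs)

lemma tsum_neg_one_pow_div_pow {s : ℕ} (hs : 1 < s) :
    ∑' n : ℕ, (-1) ^ n / ((n : ℝ) + 1) ^ s =
      (1 - 2 / 2 ^ s) * ∑' n : ℕ, 1 / ((n : ℝ) + 1) ^ s := by
  set f : ℕ → ℝ := fun n ↦ 1 / ((n : ℝ) + 1) ^ s
  have hf : Summable f := summable_one_div_add_one_pow hs
  have hodd : ∀ k, f (2 * k + 1) = f k / 2 ^ s := fun k ↦ by
    simp only [f]
    push_cast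
    rw [show (2 * (k : ℝ) + 1 + 1) = 2 * (k + 1) by ring, mul_pow]
    field_simp
  have he : Summable fun k ↦ f (2 * k) :=
    hf.comp_injective (mul_right_injective₀ two_ne_zero)
  have ho : Summable fun k ↦ f (2 * k + 1) :=
    hf.comp_injective fun a b h ↦ by simp_all
  have hsplit := tsum_even_add_odd he ho
  have hsplit_signed := tsum_even_add_odd (f := fun n ↦ (-1) ^ n * f n)
    (he.congr fun k ↦ by simp [pow_mul]) (ho.neg.congr fun k ↦ by simp [pow_succ, pow_mul])
  have heven_sign : ∀ k, (-1 : ℝ) ^ (2 * k) * f (2 * k) = f (2 * k) := fun k ↦ by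
    simp [pow_mul]
  have hodd_sign : ∀ k, (-1 : ℝ) ^ (2 * k + 1) * f (2 * k + 1) = -(f k / 2 ^ s) := fun k ↦ by
    simp [pow_succ, pow_mul, hodd]
  simp only [hodd, tsum_div_const] at hsplit
  simp only [heven_sign, hodd_sign, tsum_neg, tsum_div_const] at hsplit_signed
  simp only [f, mul_one_div] at hsplit hsplit_signed ⊢
  linear_combination hsplit - hsplit_signed

lemma Antitone.hasSum_sub_nat_add {g : ℕ → ℝ} (hg : Antitone g)
    (hlim : Tendsto g atTop (𝓝 0)) (m : ℕ) :
    HasSum (fun j ↦ g j - g (j + m)) (∑ k ∈ range m, g k) := by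
  have hpartial : ∀ N, ∑ j ∈ range N, (g j - g (j + m)) =
      ∑ k ∈ range m, g k - ∑ k ∈ range m, g (N + k) := by
    intro N
    have h₁ := sum_range_add g N m
    have h₂ := sum_range_add g m N
    rw [add_comm m N] at h₂
    simp only [sum_sub_distrib, add_comm m] at h₂ ⊢
    linarith
  rw [hasSum_iff_tendsto_nat_of_nonneg fun j ↦ sub_nonneg.2 (hg (Nat.le_add_right j m))]
  simp only [hpartial]
  simpa using tendsto_const_nhds.sub
    (tendsto_finsetSum (range m) fun k _ ↦ hlim.comp (tendsto_add_atTop_nat k))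

lemma HasSum.sum_antidiagonal {M A : Type*} [AddCommMonoid M] [TopologicalSpace M]
    [ContinuousAdd M] [RegularSpace M] [AddMonoid A] [HasAntidiagonal A] {F : A × A → M}
    {a : M} (h : HasSum F a) : HasSum (fun n ↦ ∑ p ∈ antidiagonal n, F p) a :=
  (HasAntidiagonal.sigmaAntidiagonalEquivProd.hasSum_iff.2 h).sigma fun n ↦
    (antidiagonal n).hasSum F

lemma tsum_parity_weight_mul (F : ℕ × ℕ → ℝ) :
    ∑' p : ℕ × ℕ, (1 + (-1) ^ (p.1 + 1)) * (1 + (-1) ^ (p.2 + 1)) * F p =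
      4 * ∑' p : ℕ × ℕ, F (2 * p.1 + 1, 2 * p.2 + 1) := by
  have hodd : Function.Injective fun a : ℕ ↦ 2 * a + 1 := fun a b h ↦ by simp_all
  have hweight : ∀ {i : ℕ}, (1 + (-1 : ℝ) ^ (i + 1)) ≠ 0 → Odd i := fun {i} h ↦ by
    by_contra hi
    exact h (by rw [(Nat.not_odd_iff_even.1 hi).add_one.neg_one_pow]; norm_num)
  rw [← (hodd.prodMap hodd).tsum_eq, ← tsum_mul_left]
  · refine tsum_congr fun p ↦ ?_
    simp only [Prod.map]
    rw [(odd_two_mul_add_one p.1).add_one.neg_one_pow,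
      (odd_two_mul_add_one p.2).add_one.neg_one_pow]
    norm_num
  · rintro ⟨i, j⟩ hp
    obtain ⟨a, rfl⟩ := hweight (left_ne_zero_of_mul (left_ne_zero_of_mul hp))
    obtain ⟨b, rfl⟩ := hweight (right_ne_zero_of_mul (left_ne_zero_of_mul hp))
    exact ⟨(a, b), rfl⟩

/-- The term `1 / (a b (a + b))` of the Tornheim series at `a = p.1 + 1`, `b = p.2 + 1`. -/
noncomputable def tornheim (p : ℕ × ℕ) : ℝ :=
  1 / (((p.1 : ℝ) + 1) * ((p.2 : ℝ) + 1) * ((p.1 : ℝ) + p.2 + 2))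

lemma tornheim_nonneg (p : ℕ × ℕ) : 0 ≤ tornheim p := by
  unfold tornheim; positivity

lemma tornheim_swap (p : ℕ × ℕ) : tornheim p.swap = tornheim p := by
  simp only [tornheim, Prod.fst_swap, Prod.snd_swap]; ring_nf

lemma tornheim_eq_add_div_sq (p : ℕ × ℕ) :
    tornheim p =
      (1 / ((p.1 : ℝ) + 1) + 1 / ((p.2 : ℝ) + 1)) / ((p.1 : ℝ) + p.2 + 2) ^ 2 := by
  unfold tornheim; field_simp; ring

lemma tornheim_odd_odd (p : ℕ × ℕ) :
    tornheim (2 * p.1 + 1, 2 * p.2 + 1) = tornheim p / 8 := by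
  unfold tornheim; push_cast; field_simp; ring

lemma tornheim_le_rpow (p : ℕ × ℕ) :
    tornheim p ≤
      1 / ((p.1 : ℝ) + 1) ^ (3 / 2 : ℝ) * (1 / ((p.2 : ℝ) + 1) ^ (3 / 2 : ℝ)) := by
  have h32 : ∀ n : ℕ, ((n : ℝ) + 1) ^ (3 / 2 : ℝ) = ((n : ℝ) + 1) * √((n : ℝ) + 1) := by
    intro n
    rw [Real.sqrt_eq_rpow, ← Real.rpow_one_add' (by positivity) (by norm_num)]
    norm_num
  set x : ℝ := p.1 + 1
  set y : ℝ := p.2 + 1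
  have hx : 0 < x := by positivity
  have hy : 0 < y := by positivity
  have hamgm : √x * √y ≤ x + y := by
    nlinarith [sq_nonneg (√x - √y), Real.sq_sqrt hx.le, Real.sq_sqrt hy.le,
      Real.sqrt_nonneg x, Real.sqrt_nonneg y]
  rw [h32, h32, tornheim, div_mul_div_comm, one_mul]
  apply one_div_le_one_div_of_le (by positivity)
  calc x * √x * (y * √y) = x * y * (√x * √y) := by ring
    _ ≤ x * y * (p.1 + p.2 + 2) := by
      apply mul_le_mul_of_nonneg_left _ (by positivity)
      linarith

lemma summable_tornheim : Summable tornheim := by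
  have h : Summable fun n : ℕ ↦ 1 / ((n : ℝ) + 1) ^ (3 / 2 : ℝ) := by
    simpa using (summable_nat_add_iff 1).2
      (Real.summable_one_div_nat_rpow.2 (by norm_num : (1 : ℝ) < 3 / 2))
  exact (h.mul_of_nonneg h (fun _ ↦ by positivity) (fun _ ↦ by positivity)).of_nonneg_of_le
    tornheim_nonneg tornheim_le_rpow

lemma summable_mul_tornheim {w : ℕ × ℕ → ℝ} (hw : ∀ p, |w p| ≤ 1) :
    Summable fun p ↦ w p * tornheim p :=
  summable_tornheim.of_norm_bounded fun p ↦ by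
    rw [Real.norm_eq_abs, abs_mul, abs_of_nonneg (tornheim_nonneg p)]
    exact mul_le_of_le_one_left (tornheim_nonneg p) (hw p)

lemma hasSum_tornheim_row (i : ℕ) :
    HasSum (fun j ↦ tornheim (i, j)) (harmonic (i + 1) / ((i : ℝ) + 1) ^ 2) := by
  have hanti : Antitone fun j : ℕ ↦ 1 / ((j : ℝ) + 1) := fun a b hab ↦ by
    dsimp only
    gcongr
  have h := (hanti.hasSum_sub_nat_add tendsto_one_div_add_atTop_nhds_zero_nat
    (i + 1)).div_const (((i : ℝ) + 1) ^ 2)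
  rw [← harmonic_eq_sum_range_one_div] at h
  refine h.congr_fun fun j ↦ ?_
  unfold tornheim
  push_cast
  field_simp
  ring

lemma hasSum_tornheim_rows {u : ℕ → ℝ} (hu : ∀ i, |u i| ≤ 1) :
    HasSum (fun i ↦ u i * (harmonic (i + 1) / ((i : ℝ) + 1) ^ 2))
      (∑' p, u p.1 * tornheim p) :=
  (summable_mul_tornheim fun p ↦ hu p.1).hasSum.prod_fiberwise fun i ↦
    (hasSum_tornheim_row i).mul_left (u i)

lemma sum_antidiagonal_tornheim (n : ℕ) :
    ∑ p ∈ antidiagonal n, tornheim p = 2 * harmonic (n + 1) / ((n : ℝ) + 2) ^ 2 := by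
  have hterm : ∀ p ∈ antidiagonal n,
      tornheim p = (1 / ((p.1 : ℝ) + 1) + 1 / ((p.2 : ℝ) + 1)) / ((n : ℝ) + 2) ^ 2 := by
    intro p hp
    rw [tornheim_eq_add_div_sq, ← mem_antidiagonal.1 hp]
    push_cast
    ring
  have hswap : ∑ p ∈ antidiagonal n, 1 / ((p.2 : ℝ) + 1) =
      ∑ p ∈ antidiagonal n, 1 / ((p.1 : ℝ) + 1) :=
    Nat.sum_antidiagonal_swap (f := fun p ↦ 1 / ((p.1 : ℝ) + 1))
  rw [sum_congr rfl hterm, ← sum_div, sum_add_distrib, hswap,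
    Nat.sum_antidiagonal_eq_sum_range_succ_mk, harmonic_eq_sum_range_one_div]
  ring

-- `n` indexes the diagonal `a + b = n + 1`, so the term `n = 0` vanishes.
lemma hasSum_tornheim_diagonals {v : ℕ → ℝ} (hv : ∀ n, |v n| ≤ 1) :
    HasSum (fun n ↦ v n * (2 * harmonic n / ((n : ℝ) + 1) ^ 2))
      (∑' p, v (p.1 + p.2 + 1) * tornheim p) := by
  have h := (summable_mul_tornheim fun p ↦ hv (p.1 + p.2 + 1)).hasSum.sum_antidiagonal
  rw [← hasSum_nat_add_iff' 1]
  simp only [sum_range_one, harmonic_zero, Rat.cast_zero, mul_zero, zero_div, sub_zero]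
  refine h.congr_fun fun n ↦ ?_
  rw [sum_congr rfl fun p hp ↦ by rw [mem_antidiagonal.1 hp], ← mul_sum,
    sum_antidiagonal_tornheim]
  push_cast
  ring

lemma tsum_tornheim : ∑' p, tornheim p = 2 * ∑' n : ℕ, 1 / ((n : ℝ) + 1) ^ 3 := by
  have hrows := hasSum_tornheim_rows (u := fun _ ↦ 1) fun _ ↦ by simp
  have hdiag := hasSum_tornheim_diagonals (v := fun _ ↦ 1) fun _ ↦ by simp
  simp only [one_mul] at hrows hdiag
  have h₁ := (hrows.sub (summable_one_div_add_one_pow (by norm_num : 1 < 3)).hasSum).congr_fun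
    fun n ↦ (eq_sub_of_add_eq (harmonic_succ_div_sq n).symm)
  have h₂ := (hdiag.div_const 2).congr_fun fun n ↦
    (by ring : (harmonic n : ℝ) / ((n : ℝ) + 1) ^ 2 = _)
  linarith [h₁.unique h₂]

lemma tsum_tornheim_div_two :
    (∑' p, tornheim p) / 2 = ∑' p, tornheim p + 2 * ∑' p, (-1) ^ (p.1 + 1) * tornheim p +
      ∑' p, (-1) ^ (p.1 + p.2) * tornheim p := by
  have hsign : ∀ n : ℕ, |(-1 : ℝ) ^ n| ≤ 1 := fun n ↦ (abs_neg_one_pow n).le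
  have hswap : ∑' p, (-1 : ℝ) ^ (p.2 + 1) * tornheim p =
      ∑' p, (-1) ^ (p.1 + 1) * tornheim p := by
    rw [← (Equiv.prodComm ℕ ℕ).tsum_eq]
    simp [tornheim_swap]
  have hexpand := (((summable_tornheim.hasSum.add
    (summable_mul_tornheim fun p ↦ hsign (p.1 + 1)).hasSum).add
    (summable_mul_tornheim fun p ↦ hsign (p.2 + 1)).hasSum).add
    (summable_mul_tornheim fun p ↦ hsign (p.1 + p.2)).hasSum)
  calc (∑' p, tornheim p) / 2 = 4 * ∑' p : ℕ × ℕ, tornheim (2 * p.1 + 1, 2 * p.2 + 1) := by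
        simp only [tornheim_odd_odd, tsum_div_const]
        ring
    _ = ∑' p : ℕ × ℕ, (1 + (-1) ^ (p.1 + 1)) * (1 + (-1) ^ (p.2 + 1)) * tornheim p :=
        (tsum_parity_weight_mul tornheim).symm
    _ = _ := (hexpand.congr_fun fun p ↦ by ring).tsum_eq
    _ = _ := by rw [hswap]; ring

lemma hasSum_alternating_harmonic_div_sq_of_rows :
    HasSum (fun n : ℕ ↦ (-1) ^ (n + 1) * ((harmonic n : ℝ) / ((n : ℝ) + 1) ^ 2))
      (∑' p, (-1) ^ (p.1 + 1) * tornheim p + 3 / 4 * ∑' n : ℕ, 1 / ((n : ℝ) + 1) ^ 3) := by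
  have hrows :=
    hasSum_tornheim_rows (u := fun i ↦ (-1) ^ (i + 1)) fun i ↦ (abs_neg_one_pow _).le
  have hcubes : Summable fun n : ℕ ↦ (-1 : ℝ) ^ n / ((n : ℝ) + 1) ^ 3 :=
    Summable.of_norm <| (summable_one_div_add_one_pow (by norm_num : 1 < 3)).congr fun n ↦ by
      simp [abs_of_pos (by positivity : (0 : ℝ) < n + 1)]
  have halt := hcubes.hasSum
  rw [tsum_neg_one_pow_div_pow (by norm_num : 1 < 3),
    show (1 : ℝ) - 2 / 2 ^ 3 = 3 / 4 by norm_num] at halt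
  refine (hrows.add halt).congr_fun fun n ↦ ?_
  rw [harmonic_succ_div_sq]
  ring

lemma hasSum_alternating_harmonic_div_sq_of_diagonals :
    HasSum (fun n : ℕ ↦ (-1) ^ (n + 1) * ((harmonic n : ℝ) / ((n : ℝ) + 1) ^ 2))
      ((∑' p, (-1) ^ (p.1 + p.2) * tornheim p) / 2) := by
  have hdiag :=
    hasSum_tornheim_diagonals (v := fun n ↦ (-1) ^ (n + 1)) fun n ↦ (abs_neg_one_pow _).le
  simp only [pow_succ _ (_ + _ + 1), pow_succ _ (_ + _), mul_neg_one, neg_neg] at hdiag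
  exact (hdiag.div_const 2).congr_fun fun n ↦ by ring

/-- `8 ζ(1, 2̄) = ζ(3)`, where
`ζ(1,2̄) = ∑_{0<k₁<k₂} (-1)^{k₂}/(k₁ k₂²)` is written as an (absolutely
convergent) sum over the outer index of the inner finite harmonic sum. -/
theorem eight_zeta_one_bar_two :
    8 * (∑' n : ℕ, (-1 : ℝ) ^ (n + 1) / ((n : ℝ) + 1) ^ 2
          * ∑ m ∈ Finset.range n, 1 / ((m : ℝ) + 1))
    = ∑' k : ℕ, 1 / ((k : ℝ) + 1) ^ 3 := by
  have hsum : ∑' n : ℕ, (-1 : ℝ) ^ (n + 1) / ((n : ℝ) + 1) ^ 2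
      * ∑ m ∈ Finset.range n, 1 / ((m : ℝ) + 1) =
      ∑' n : ℕ, (-1) ^ (n + 1) * ((harmonic n : ℝ) / ((n : ℝ) + 1) ^ 2) :=
    tsum_congr fun n ↦ by rw [harmonic_eq_sum_range_one_div]; ring
  rw [hsum, hasSum_alternating_harmonic_div_sq_of_rows.tsum_eq]
  have hrows_diag := hasSum_alternating_harmonic_div_sq_of_rows.unique
    hasSum_alternating_harmonic_div_sq_of_diagonals
  linarith [tsum_tornheim, tsum_tornheim_div_two]
end

section
/- 2 ζ(3̄, 3) + 3 ζ(2̄, 4) = -(3/8) ζ(3)^2 - (5/64) ζ(6). -/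
namespace ZetaBar

/-- ζ-type single sum -/
noncomputable def Z (a : ℕ) : ℝ := ∑' k : ℕ, 1 / ((k : ℝ) + 1) ^ a

/-- alternating single sum, `E a = ∑ (-1)^m / m^a` -/
noncomputable def E (a : ℕ) : ℝ := ∑' k : ℕ, (-1 : ℝ) ^ (k + 1) / ((k : ℝ) + 1) ^ a

/-- integrand of rectangle double sums -/
noncomputable def Rf (ε δ : ℝ) (a b : ℕ) : ℕ × ℕ → ℝ := fun q =>
  ε ^ (q.1 + 1) * δ ^ (q.2 + 1) / (((q.1 : ℝ) + 1) ^ a * ((q.2 : ℝ) + 1) ^ b)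

/-- integrand of triangular double sums (m = i+1 < k = i+j+2) -/
noncomputable def Df (ε δ : ℝ) (a b : ℕ) : ℕ × ℕ → ℝ := fun q =>
  ε ^ (q.1 + 1) * δ ^ (q.1 + q.2 + 2) /
    (((q.1 : ℝ) + 1) ^ a * ((q.1 : ℝ) + (q.2 : ℝ) + 2) ^ b)

noncomputable def R (ε δ : ℝ) (a b : ℕ) : ℝ := ∑' q : ℕ × ℕ, Rf ε δ a b q
noncomputable def D (ε δ : ℝ) (a b : ℕ) : ℝ := ∑' q : ℕ × ℕ, Df ε δ a b q

lemma summable_zpow {a : ℕ} (ha : 2 ≤ a) : Summable (fun k : ℕ => 1 / ((k : ℝ) + 1) ^ a) := by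
  have h : Summable (fun n : ℕ => 1 / (n : ℝ) ^ a) :=
    Real.summable_one_div_nat_pow.2 (by omega)
  have := (summable_nat_add_iff 1).2 h
  refine this.congr fun n => ?_
  push_cast
  ring_nf

lemma summable_sq : Summable (fun k : ℕ => 1 / ((k : ℝ) + 1) ^ 2) := summable_zpow le_rfl

set_option maxHeartbeats 1000000 in
lemma summable_prod_sq :
    Summable (fun q : ℕ × ℕ => (1 / ((q.1 : ℝ) + 1) ^ 2) * (1 / ((q.2 : ℝ) + 1) ^ 2)) :=
  summable_sq.mul_of_nonneg summable_sq (fun k => by positivity) (fun k => by positivity)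

lemma pos_cast (i : ℕ) : (0:ℝ) < (i : ℝ) + 1 := by positivity

lemma abs_pm {ε : ℝ} (hε : ε = 1 ∨ ε = -1) (n : ℕ) : |ε ^ n| = 1 := by
  rcases hε with h | h <;> simp [h, abs_pow]

/-- domination for `Rf` -/
lemma abs_Rf_le {ε δ : ℝ} (hε : ε = 1 ∨ ε = -1) (hδ : δ = 1 ∨ δ = -1)
    {a b : ℕ} (ha : 2 ≤ a) (hb : 2 ≤ b) (q : ℕ × ℕ) :
    |Rf ε δ a b q| ≤ (1 / ((q.1 : ℝ) + 1) ^ 2) * (1 / ((q.2 : ℝ) + 1) ^ 2) := by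
  obtain ⟨i, j⟩ := q
  have hm : (0:ℝ) < (i : ℝ) + 1 := pos_cast i
  have hn : (0:ℝ) < (j : ℝ) + 1 := pos_cast j
  have h1 : ((i : ℝ) + 1) ^ 2 ≤ ((i : ℝ) + 1) ^ a := pow_le_pow_right₀ (by linarith) ha
  have h2 : ((j : ℝ) + 1) ^ 2 ≤ ((j : ℝ) + 1) ^ b := pow_le_pow_right₀ (by linarith) hb
  have habs : |Rf ε δ a b (i, j)| = 1 / (((i : ℝ) + 1) ^ a * ((j : ℝ) + 1) ^ b) := by
    rw [Rf, abs_div, abs_mul, abs_pm hε, abs_pm hδ, abs_of_pos (by positivity)]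
    norm_num
  rw [habs]
  rw [div_mul_div_comm, one_mul]
  apply one_div_le_one_div_of_le (by positivity)
  exact mul_le_mul h1 h2 (by positivity) (by positivity)

lemma summable_Rf {ε δ : ℝ} (hε : ε = 1 ∨ ε = -1) (hδ : δ = 1 ∨ δ = -1)
    {a b : ℕ} (ha : 2 ≤ a) (hb : 2 ≤ b) : Summable (Rf ε δ a b) := by
  exact Summable.of_abs (Summable.of_nonneg_of_le (fun q => abs_nonneg _)
    (fun q => abs_Rf_le hε hδ ha hb q) summable_prod_sq)

/-- domination for `Df` -/
lemma abs_Df_le {ε δ : ℝ} (hε : ε = 1 ∨ ε = -1) (hδ : δ = 1 ∨ δ = -1)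
    {a b : ℕ} (ha : 1 ≤ a) (hb : 2 ≤ b) (hab : a + b = 6) (q : ℕ × ℕ) :
    |Df ε δ a b q| ≤ (1 / ((q.1 : ℝ) + 1) ^ 2) * (1 / ((q.2 : ℝ) + 1) ^ 2) := by
  obtain ⟨i, j⟩ := q
  have hm : (0:ℝ) < (i : ℝ) + 1 := pos_cast i
  have hn : (0:ℝ) < (j : ℝ) + 1 := pos_cast j
  have hs : (0:ℝ) < (i : ℝ) + (j : ℝ) + 2 := by positivity
  have habs : |Df ε δ a b (i, j)| = 1 / (((i : ℝ) + 1) ^ a * ((i : ℝ) + (j : ℝ) + 2) ^ b) := by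
    rw [Df, abs_div, abs_mul, abs_pm hε, abs_pm hδ, abs_of_pos (by positivity)]
    norm_num
  rw [habs, div_mul_div_comm, one_mul]
  apply one_div_le_one_div_of_le (by positivity)
  -- key: (i+1)^a * (i+j+2)^b ≥ (i+1)^2 * (j+1)^2
  have h1 : ((i : ℝ) + 1) ^ (a + (b-2)) * (((i : ℝ)+(j : ℝ)+2) ^ 2) ≤
      ((i : ℝ) + 1) ^ a * ((i : ℝ) + (j : ℝ) + 2) ^ b := by
    have hb2 : b = (b - 2) + 2 := by omega
    rw [pow_add]
    rw [mul_assoc]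
    apply mul_le_mul_of_nonneg_left ?_ (by positivity)
    calc ((i : ℝ) + 1) ^ (b-2) * ((i : ℝ)+(j : ℝ)+2) ^ 2
        ≤ ((i : ℝ)+(j : ℝ)+2) ^ (b-2) * ((i : ℝ)+(j : ℝ)+2) ^ 2 := by
          apply mul_le_mul_of_nonneg_right ?_ (by positivity)
          exact pow_le_pow_left₀ (by linarith) (by linarith) _
      _ = ((i : ℝ)+(j : ℝ)+2) ^ b := by rw [← pow_add]; congr 1; omega
  have h2 : ((i : ℝ) + 1) ^ 2 * ((j : ℝ) + 1) ^ 2 ≤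
      ((i : ℝ) + 1) ^ (a + (b-2)) * (((i : ℝ)+(j : ℝ)+2) ^ 2) := by
    have hab2 : 2 ≤ a + (b - 2) := by omega
    have : ((i : ℝ) + 1) ^ 2 ≤ ((i : ℝ) + 1) ^ (a + (b-2)) :=
      pow_le_pow_right₀ (by linarith) hab2
    have h3 : ((j : ℝ) + 1) ^ 2 ≤ ((i : ℝ)+(j : ℝ)+2) ^ 2 :=
      pow_le_pow_left₀ (by linarith) (by linarith) _
    exact mul_le_mul this h3 (by positivity) (by positivity)
  linarith

lemma summable_Df {ε δ : ℝ} (hε : ε = 1 ∨ ε = -1) (hδ : δ = 1 ∨ δ = -1)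
    {a b : ℕ} (ha : 1 ≤ a) (hb : 2 ≤ b) (hab : a + b = 6) : Summable (Df ε δ a b) := by
  exact Summable.of_abs (Summable.of_nonneg_of_le (fun q => abs_nonneg _)
    (fun q => abs_Df_le hε hδ ha hb hab q) summable_prod_sq)

end ZetaBar
namespace ZetaBar

noncomputable def Sf (ε : ℝ) (a : ℕ) : ℕ → ℝ := fun k => ε ^ (k + 1) / ((k : ℝ) + 1) ^ a

lemma abs_Sf {ε : ℝ} (hε : ε = 1 ∨ ε = -1) (a : ℕ) (k : ℕ) :
    |Sf ε a k| = 1 / ((k : ℝ) + 1) ^ a := by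
  have : |ε ^ (k+1)| = 1 := by rcases hε with h | h <;> simp [h, abs_pow]
  rw [Sf, abs_div, this, abs_of_pos (by positivity)]

lemma summable_abs_Sf {ε : ℝ} (hε : ε = 1 ∨ ε = -1) {a : ℕ} (ha : 2 ≤ a) :
    Summable (fun k => |Sf ε a k|) := by
  refine (summable_zpow ha).congr fun k => (abs_Sf hε a k).symm

lemma summable_Sf {ε : ℝ} (hε : ε = 1 ∨ ε = -1) {a : ℕ} (ha : 2 ≤ a) :
    Summable (Sf ε a) := (summable_abs_Sf hε ha).of_abs

lemma fubini {ε δ : ℝ} (hε : ε = 1 ∨ ε = -1) (hδ : δ = 1 ∨ δ = -1)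
    {a b : ℕ} (ha : 2 ≤ a) (hb : 2 ≤ b) :
    R ε δ a b = (∑' k, Sf ε a k) * (∑' k, Sf δ b k) := by
  rw [R]
  rw [tsum_mul_tsum_of_summable_norm
    (by simpa [Real.norm_eq_abs] using summable_abs_Sf hε ha)
    (by simpa [Real.norm_eq_abs] using summable_abs_Sf hδ hb)]
  apply tsum_congr
  intro q
  rw [Sf, Sf, Rf, div_mul_div_comm]

lemma Z_eq_Sf (a : ℕ) : Z a = ∑' k, Sf 1 a k := by
  rw [Z]; exact tsum_congr fun k => by simp [Sf]

lemma E_eq_Sf (a : ℕ) : E a = ∑' k, Sf (-1) a k := by rfl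

lemma Z_eq (a : ℕ) (ha : 1 ≤ a) : Z a = ∑' n : ℕ, 1 / (n : ℝ) ^ a := by
  rw [Z]
  have hinj : Function.Injective (fun k : ℕ => k + 1) := fun x y h => by
    dsimp at h; omega
  have hsupp : Function.support (fun n : ℕ => 1 / (n : ℝ) ^ a) ⊆
      Set.range (fun k : ℕ => k + 1) := by
    intro n hn
    rcases n with _ | m
    · exfalso; apply hn; simp [zero_pow (by omega : a ≠ 0)]
    · exact ⟨m, rfl⟩
  rw [← hinj.tsum_eq hsupp]
  push_cast
  rfl

lemma E_val {a : ℕ} (ha : 2 ≤ a) : E a = (2 / 2 ^ a - 1) * Z a := by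
  have h1 : Summable (fun k : ℕ => 1 / ((k : ℝ) + 1) ^ a) := summable_zpow ha
  have h2 : Summable (Sf (-1) a) := summable_Sf (Or.inr rfl) ha
  have hadd : Z a + E a = ∑' k : ℕ, (1 + (-1 : ℝ) ^ (k + 1)) / ((k : ℝ) + 1) ^ a := by
    have h2' : Summable (fun k : ℕ => (-1 : ℝ) ^ (k + 1) / ((k : ℝ) + 1) ^ a) := h2
    rw [Z, E, ← Summable.tsum_add h1 h2']
    exact tsum_congr fun k => by ring
  have hinj : Function.Injective (fun t : ℕ => 2 * t + 1) := fun x y h => by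
    dsimp at h; omega
  have hsupp : Function.support (fun k : ℕ => (1 + (-1 : ℝ) ^ (k + 1)) / ((k : ℝ) + 1) ^ a) ⊆
      Set.range (fun t : ℕ => 2 * t + 1) := by
    intro k hk
    rcases Nat.even_or_odd k with he | ho
    · exfalso
      apply hk
      have : (-1 : ℝ) ^ (k + 1) = -1 := (he.add_one).neg_one_pow
      simp [this]
    · obtain ⟨m, hm⟩ := ho
      exact ⟨m, by dsimp; omega⟩
  have h3 : Z a + E a = (2 / 2 ^ a) * Z a := by
    rw [hadd, ← hinj.tsum_eq hsupp]
    have : ∀ t : ℕ,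
        (1 + (-1 : ℝ) ^ (2 * t + 1 + 1)) / (((2 * t + 1 : ℕ) : ℝ) + 1) ^ a
          = (2 / 2 ^ a) * (1 / ((t : ℝ) + 1) ^ a) := by
      intro t
      have hpow : (-1 : ℝ) ^ (2 * t + 1 + 1) = 1 := Even.neg_one_pow ⟨t + 1, by ring⟩
      have hc : ((2 * t + 1 : ℕ) : ℝ) + 1 = 2 * ((t : ℝ) + 1) := by push_cast; ring
      rw [hpow, hc, mul_pow]
      have : ((t : ℝ) + 1) ^ a ≠ 0 := by positivity
      field_simp
      norm_num
    rw [tsum_congr this, tsum_mul_left, Z]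
  have : E a = (2 / 2 ^ a) * Z a - Z a := by linarith
  rw [this]; ring

lemma bernoulli'_five : bernoulli' 5 = 0 := by
  have h52 : Nat.choose 5 2 = 10 := by decide
  have h53 : Nat.choose 5 3 = 10 := by decide
  rw [bernoulli'_def]
  norm_num [Finset.sum_range_succ, h52, h53]

lemma bernoulli'_six : bernoulli' 6 = 1 / 42 := by
  have h62 : Nat.choose 6 2 = 15 := by decide
  have h63 : Nat.choose 6 3 = 20 := by decide
  have h64 : Nat.choose 6 4 = 15 := by decide
  rw [bernoulli'_def]
  norm_num [Finset.sum_range_succ, h62, h63, h64, bernoulli'_five]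

open Real in
lemma Z_six : Z 6 = π ^ 6 / 945 := by
  rw [Z_eq 6 (by omega)]
  have h := (hasSum_zeta_nat (k := 3) (by omega)).tsum_eq
  norm_num at h
  simp only [one_div]
  rw [h]
  have hb : bernoulli 6 = 1 / 42 := by
    rw [bernoulli_eq_bernoulli'_of_ne_one (by omega), bernoulli'_six]
  rw [hb]
  norm_num [Nat.factorial]
  ring

open Real in
lemma Z_two_mul_Z_four : Z 2 * Z 4 = 7 / 4 * Z 6 := by
  have h2 : Z 2 = π ^ 2 / 6 := by rw [Z_eq 2 (by omega)]; exact hasSum_zeta_two.tsum_eq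
  have h4 : Z 4 = π ^ 4 / 90 := by rw [Z_eq 4 (by omega)]; exact hasSum_zeta_four.tsum_eq
  rw [h2, h4, Z_six]; ring



lemma hsign (i j : ℕ) : (-1 : ℝ) ^ (i + 1) * (-1 : ℝ) ^ (i + j + 2) = (-1 : ℝ) ^ (j + 1) := by
  rw [← pow_add]
  have h : (i + 1) + (i + j + 2) = 2 * (i + 1) + (j + 1) := by ring
  rw [h, pow_add, pow_mul]
  norm_num

lemma summable_swap {f : ℕ × ℕ → ℝ} (h : Summable f) :
    Summable (fun q : ℕ × ℕ => f q.swap) :=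
  ((Equiv.prodComm ℕ ℕ).summable_iff.2 h).congr fun q => rfl

lemma tsum_swap (f : ℕ × ℕ → ℝ) : ∑' q : ℕ × ℕ, f q.swap = ∑' q : ℕ × ℕ, f q :=
  Equiv.tsum_eq (Equiv.prodComm ℕ ℕ) f

lemma tsum_add6 {f1 f2 f3 f4 f5 f6 : ℕ × ℕ → ℝ} (h1 : Summable f1) (h2 : Summable f2)
    (h3 : Summable f3) (h4 : Summable f4) (h5 : Summable f5) (h6 : Summable f6) :
    ∑' q : ℕ × ℕ, (f1 q + f2 q + f3 q + f4 q + f5 q + f6 q)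
      = (∑' q, f1 q) + (∑' q, f2 q) + (∑' q, f3 q) + (∑' q, f4 q) + (∑' q, f5 q)
        + (∑' q, f6 q) := by
  rw [Summable.tsum_add ((((h1.add h2).add h3).add h4).add h5) h6,
      Summable.tsum_add (((h1.add h2).add h3).add h4) h5,
      Summable.tsum_add ((h1.add h2).add h3) h4,
      Summable.tsum_add (h1.add h2) h3,
      Summable.tsum_add h1 h2]

/-- partial fraction decomposition, weight 6, (3,3) -/
lemma pf33 {m n : ℝ} (hm : 0 < m) (hn : 0 < n) :
    1 / (m ^ 3 * n ^ 3)
      = 6 / (m * (m + n) ^ 5) + 3 / (m ^ 2 * (m + n) ^ 4) + 1 / (m ^ 3 * (m + n) ^ 3)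
        + 6 / (n * (m + n) ^ 5) + 3 / (n ^ 2 * (m + n) ^ 4) + 1 / (n ^ 3 * (m + n) ^ 3) := by
  have hs : 0 < m + n := by linarith
  field_simp
  ring

/-- partial fraction decomposition, weight 6, (2,4) -/
lemma pf24 {m n : ℝ} (hm : 0 < m) (hn : 0 < n) :
    1 / (m ^ 2 * n ^ 4)
      = 4 / (m * (m + n) ^ 5) + 1 / (m ^ 2 * (m + n) ^ 4)
        + 4 / (n * (m + n) ^ 5) + 3 / (n ^ 2 * (m + n) ^ 4) + 2 / (n ^ 3 * (m + n) ^ 3)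
        + 1 / (n ^ 4 * (m + n) ^ 2) := by
  have hs : 0 < m + n := by linarith
  field_simp
  ring

def eLt : ℕ × ℕ ≃ ↥{q : ℕ × ℕ | q.1 < q.2} where
  toFun p := ⟨(p.1, p.1 + p.2 + 1), Set.mem_setOf_eq.mpr (by omega)⟩
  invFun x := (x.val.1, x.val.2 - x.val.1 - 1)
  left_inv p := by ext <;> dsimp <;> omega
  right_inv x := by
    have h : x.val.1 < x.val.2 := x.2
    apply Subtype.ext; apply Prod.ext <;> dsimp <;> omega

def eGt : ℕ × ℕ ≃ ↥{q : ℕ × ℕ | q.2 < q.1} where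
  toFun p := ⟨(p.1 + p.2 + 1, p.1), Set.mem_setOf_eq.mpr (by omega)⟩
  invFun x := (x.val.2, x.val.1 - x.val.2 - 1)
  left_inv p := by ext <;> dsimp <;> omega
  right_inv x := by
    have h : x.val.2 < x.val.1 := x.2
    apply Subtype.ext; apply Prod.ext <;> dsimp <;> omega

def eDiag : ℕ ≃ ↥{q : ℕ × ℕ | q.1 = q.2} where
  toFun i := ⟨(i, i), rfl⟩
  invFun x := x.val.1
  left_inv i := rfl
  right_inv x := by
    have h : x.val.1 = x.val.2 := x.2
    apply Subtype.ext; apply Prod.ext <;> dsimp <;> omega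

lemma tsum_trichotomy {f : ℕ × ℕ → ℝ} (hf : Summable f) :
    ∑' q : ℕ × ℕ, f q
      = (∑' p : ℕ × ℕ, f (p.1, p.1 + p.2 + 1)) + (∑' p : ℕ × ℕ, f (p.1 + p.2 + 1, p.1))
        + ∑' i : ℕ, f (i, i) := by
  have hpt : ∀ q : ℕ × ℕ, f q = ({q : ℕ × ℕ | q.1 < q.2}).indicator f q
      + ({q : ℕ × ℕ | q.2 < q.1}).indicator f q
      + ({q : ℕ × ℕ | q.1 = q.2}).indicator f q := by
    intro q
    rcases lt_trichotomy q.1 q.2 with h | h | h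
    · rw [Set.indicator_of_mem (by exact h),
        Set.indicator_of_notMem (by simp only [Set.mem_setOf_eq]; omega),
        Set.indicator_of_notMem (by simp only [Set.mem_setOf_eq]; omega)]
      ring
    · rw [Set.indicator_of_notMem (by simp only [Set.mem_setOf_eq]; omega),
        Set.indicator_of_notMem (by simp only [Set.mem_setOf_eq]; omega),
        Set.indicator_of_mem (by exact h)]
      ring
    · rw [Set.indicator_of_notMem (by simp only [Set.mem_setOf_eq]; omega),
        Set.indicator_of_mem (by exact h),
        Set.indicator_of_notMem (by simp only [Set.mem_setOf_eq]; omega)]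
      ring
  rw [tsum_congr hpt,
    Summable.tsum_add ((hf.indicator _).add (hf.indicator _)) (hf.indicator _),
    Summable.tsum_add (hf.indicator _) (hf.indicator _),
    ← tsum_subtype {q : ℕ × ℕ | q.1 < q.2} f, ← tsum_subtype {q : ℕ × ℕ | q.2 < q.1} f,
    ← tsum_subtype {q : ℕ × ℕ | q.1 = q.2} f]
  congr 1
  · congr 1
    · rw [← Equiv.tsum_eq eLt (fun x : ↥{q : ℕ × ℕ | q.1 < q.2} => f ↑x)]
      exact tsum_congr fun p => rfl
    · rw [← Equiv.tsum_eq eGt (fun x : ↥{q : ℕ × ℕ | q.2 < q.1} => f ↑x)]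
      exact tsum_congr fun p => rfl
  · rw [← Equiv.tsum_eq eDiag (fun x : ↥{q : ℕ × ℕ | q.1 = q.2} => f ↑x)]
    exact tsum_congr fun p => rfl



lemma stuffle {a b : ℕ} (ha : 2 ≤ a) (hb : 2 ≤ b) (hab : a + b = 6) :
    R (-1) (-1) a b = D (-1) (-1) a b + D (-1) (-1) b a + Z 6 := by
  have hf : Summable (Rf (-1) (-1) a b) := summable_Rf (Or.inr rfl) (Or.inr rfl) ha hb
  rw [R, tsum_trichotomy hf]
  congr 1
  · congr 1
    · rw [D]
      apply tsum_congr
      intro p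
      obtain ⟨i, t⟩ := p
      simp only [Rf, Df]
      have h2 : ((i + t + 1 : ℕ) : ℝ) + 1 = (i : ℝ) + (t : ℝ) + 2 := by push_cast; ring
      have h3 : (i + t + 1 + 1 : ℕ) = i + t + 2 := by omega
      rw [h2, h3]
    · rw [D]
      apply tsum_congr
      intro p
      obtain ⟨j, t⟩ := p
      simp only [Rf, Df]
      have h2 : ((j + t + 1 : ℕ) : ℝ) + 1 = (j : ℝ) + (t : ℝ) + 2 := by push_cast; ring
      have h3 : (j + t + 1 + 1 : ℕ) = j + t + 2 := by omega
      rw [h2, h3]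
      ring
  · rw [Z]
    apply tsum_congr
    intro i
    simp only [Rf]
    have hs : (-1 : ℝ) ^ (i + 1) * (-1 : ℝ) ^ (i + 1) = 1 := by
      rw [← pow_add]
      exact Even.neg_one_pow ⟨i + 1, by ring⟩
    have hd : ((i : ℝ) + 1) ^ a * ((i : ℝ) + 1) ^ b = ((i : ℝ) + 1) ^ 6 := by
      rw [← pow_add, hab]
    rw [hs, hd]

lemma shuffle33 :
    R 1 (-1) 3 3
      = 6 * D (-1) (-1) 1 5 + 3 * D (-1) (-1) 2 4 + D (-1) (-1) 3 3
        + 6 * D (-1) 1 1 5 + 3 * D (-1) 1 2 4 + D (-1) 1 3 3 := by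
  have hnn : ∀ r b : ℕ, 1 ≤ r → 2 ≤ b → r + b = 6 → Summable (Df (-1) (-1) r b) :=
    fun r b h1 h2 h3 => summable_Df (Or.inr rfl) (Or.inr rfl) h1 h2 h3
  have hnp : ∀ r b : ℕ, 1 ≤ r → 2 ≤ b → r + b = 6 → Summable (Df (-1) 1 r b) :=
    fun r b h1 h2 h3 => summable_Df (Or.inr rfl) (Or.inl rfl) h1 h2 h3
  have key : ∀ q : ℕ × ℕ, Rf 1 (-1) 3 3 q
      = 6 * Df (-1) (-1) 1 5 q + 3 * Df (-1) (-1) 2 4 q + Df (-1) (-1) 3 3 q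
        + 6 * Df (-1) 1 1 5 q.swap + 3 * Df (-1) 1 2 4 q.swap + Df (-1) 1 3 3 q.swap := by
    intro q
    obtain ⟨i, j⟩ := q
    simp only [Rf, Df, Prod.swap_prod_mk, one_pow, one_mul, mul_one]
    rw [hsign i j]
    have hss : (j : ℝ) + (i : ℝ) + 2 = (i : ℝ) + (j : ℝ) + 2 := by ring
    rw [hss]
    linear_combination ((-1 : ℝ) ^ (j + 1)) * pf33 (pos_cast i) (pos_cast j)
  rw [R, tsum_congr key,
    tsum_add6 ((hnn 1 5 (by omega) (by omega) rfl).mul_left 6)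
      ((hnn 2 4 (by omega) (by omega) rfl).mul_left 3)
      (hnn 3 3 (by omega) (by omega) rfl)
      (summable_swap ((hnp 1 5 (by omega) (by omega) rfl).mul_left 6))
      (summable_swap ((hnp 2 4 (by omega) (by omega) rfl).mul_left 3))
      (summable_swap (hnp 3 3 (by omega) (by omega) rfl))]
  simp only [tsum_mul_left]
  rw [tsum_swap (Df (-1) 1 1 5), tsum_swap (Df (-1) 1 2 4), tsum_swap (Df (-1) 1 3 3)]
  simp only [D]

lemma shuffle24 :
    R (-1) 1 2 4
      = 4 * D (-1) 1 1 5 + D (-1) 1 2 4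
        + 4 * D (-1) (-1) 1 5 + 3 * D (-1) (-1) 2 4 + 2 * D (-1) (-1) 3 3
        + D (-1) (-1) 4 2 := by
  have hnn : ∀ r b : ℕ, 1 ≤ r → 2 ≤ b → r + b = 6 → Summable (Df (-1) (-1) r b) :=
    fun r b h1 h2 h3 => summable_Df (Or.inr rfl) (Or.inr rfl) h1 h2 h3
  have hnp : ∀ r b : ℕ, 1 ≤ r → 2 ≤ b → r + b = 6 → Summable (Df (-1) 1 r b) :=
    fun r b h1 h2 h3 => summable_Df (Or.inr rfl) (Or.inl rfl) h1 h2 h3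
  have key : ∀ q : ℕ × ℕ, Rf (-1) 1 2 4 q
      = 4 * Df (-1) 1 1 5 q + Df (-1) 1 2 4 q
        + 4 * Df (-1) (-1) 1 5 q.swap + 3 * Df (-1) (-1) 2 4 q.swap
        + 2 * Df (-1) (-1) 3 3 q.swap + Df (-1) (-1) 4 2 q.swap := by
    intro q
    obtain ⟨i, j⟩ := q
    simp only [Rf, Df, Prod.swap_prod_mk, one_pow, one_mul, mul_one]
    rw [hsign j i]
    have hss : (j : ℝ) + (i : ℝ) + 2 = (i : ℝ) + (j : ℝ) + 2 := by ring
    rw [hss]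
    linear_combination ((-1 : ℝ) ^ (i + 1)) * pf24 (pos_cast i) (pos_cast j)
  rw [R, tsum_congr key,
    tsum_add6 ((hnp 1 5 (by omega) (by omega) rfl).mul_left 4)
      (hnp 2 4 (by omega) (by omega) rfl)
      (summable_swap ((hnn 1 5 (by omega) (by omega) rfl).mul_left 4))
      (summable_swap ((hnn 2 4 (by omega) (by omega) rfl).mul_left 3))
      (summable_swap ((hnn 3 3 (by omega) (by omega) rfl).mul_left 2))
      (summable_swap (hnn 4 2 (by omega) (by omega) rfl))]
  simp only [tsum_mul_left]
  rw [tsum_swap (Df (-1) (-1) 1 5), tsum_swap (Df (-1) (-1) 2 4),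
    tsum_swap (Df (-1) (-1) 3 3), tsum_swap (Df (-1) (-1) 4 2)]
  simp only [D]

def eTarget : ℕ × ℕ ≃ {p : ℕ × ℕ // 0 < p.1 ∧ p.1 < p.2} where
  toFun q := ⟨(q.1 + 1, q.1 + q.2 + 2), by constructor <;> omega⟩
  invFun x := (x.val.1 - 1, x.val.2 - x.val.1 - 1)
  left_inv q := by ext <;> dsimp <;> omega
  right_inv x := by
    have h := x.2
    apply Subtype.ext; apply Prod.ext <;> dsimp <;> omega

lemma target_eq (a b : ℕ) :
    (∑' p : {p : ℕ × ℕ // 0 < p.1 ∧ p.1 < p.2},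
        (-1 : ℝ) ^ p.1.1 / ((p.1.1 : ℝ) ^ a * (p.1.2 : ℝ) ^ b)) = D (-1) 1 a b := by
  rw [← Equiv.tsum_eq eTarget (fun p : {p : ℕ × ℕ // 0 < p.1 ∧ p.1 < p.2} =>
    (-1 : ℝ) ^ p.1.1 / ((p.1.1 : ℝ) ^ a * (p.1.2 : ℝ) ^ b)), D]
  apply tsum_congr
  intro q
  obtain ⟨i, j⟩ := q
  simp only [Df, eTarget, Equiv.coe_fn_mk, one_pow, mul_one]
  push_cast
  ring

end ZetaBar

/-- `2 ζ(3̄,3) + 3 ζ(2̄,4) = -(3/8) ζ(3)² - (5/64) ζ(6)`. -/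
theorem two_zeta_bar3_3_add_three_zeta_bar2_4 :
    2 * (∑' p : {p : ℕ × ℕ // 0 < p.1 ∧ p.1 < p.2},
          (-1 : ℝ) ^ p.1.1 / ((p.1.1 : ℝ) ^ 3 * (p.1.2 : ℝ) ^ 3))
    + 3 * (∑' p : {p : ℕ × ℕ // 0 < p.1 ∧ p.1 < p.2},
          (-1 : ℝ) ^ p.1.1 / ((p.1.1 : ℝ) ^ 2 * (p.1.2 : ℝ) ^ 4))
    = -(3 / 8) * (∑' k : ℕ, 1 / ((k : ℝ) + 1) ^ 3) ^ 2
      - (5 / 64) * ∑' k : ℕ, 1 / ((k : ℝ) + 1) ^ 6 := by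
  open ZetaBar in
  rw [ZetaBar.target_eq 3 3, ZetaBar.target_eq 2 4]
  have hz3 : (∑' k : ℕ, 1 / ((k : ℝ) + 1) ^ 3) = Z 3 := rfl
  have hz6 : (∑' k : ℕ, 1 / ((k : ℝ) + 1) ^ 6) = Z 6 := rfl
  rw [hz3, hz6]
  have hfub : ∀ (ε δ : ℝ), (ε = 1 ∨ ε = -1) → (δ = 1 ∨ δ = -1) → ∀ a b : ℕ, 2 ≤ a → 2 ≤ b →
      R ε δ a b = (∑' k, Sf ε a k) * (∑' k, Sf δ b k) :=
    fun ε δ hε hδ a b ha hb => fubini hε hδ ha hb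
  have hE1 : E 2 * Z 4
      = 4 * D (-1) 1 1 5 + D (-1) 1 2 4
        + 4 * D (-1) (-1) 1 5 + 3 * D (-1) (-1) 2 4 + 2 * D (-1) (-1) 3 3
        + D (-1) (-1) 4 2 := by
    rw [E_eq_Sf, Z_eq_Sf, ← hfub (-1) 1 (Or.inr rfl) (Or.inl rfl) 2 4 (by omega) (by omega)]
    exact shuffle24
  have hE2 : E 2 * E 4 = D (-1) (-1) 2 4 + D (-1) (-1) 4 2 + Z 6 := by
    rw [E_eq_Sf, E_eq_Sf, ← hfub (-1) (-1) (Or.inr rfl) (Or.inr rfl) 2 4 (by omega) (by omega)]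
    exact stuffle (by omega) (by omega) rfl
  have hE3 : Z 3 * E 3
      = 6 * D (-1) (-1) 1 5 + 3 * D (-1) (-1) 2 4 + D (-1) (-1) 3 3
        + 6 * D (-1) 1 1 5 + 3 * D (-1) 1 2 4 + D (-1) 1 3 3 := by
    rw [Z_eq_Sf, E_eq_Sf, ← hfub 1 (-1) (Or.inl rfl) (Or.inr rfl) 3 3 (by omega) (by omega)]
    exact shuffle33
  have hE4 : E 3 * E 3 = D (-1) (-1) 3 3 + D (-1) (-1) 3 3 + Z 6 := by
    rw [E_eq_Sf, ← hfub (-1) (-1) (Or.inr rfl) (Or.inr rfl) 3 3 (by omega) (by omega)]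
    exact stuffle (by omega) (by omega) rfl
  have hv2 : E 2 = -(1 / 2) * Z 2 := by
    rw [E_val (by omega : 2 ≤ 2)]
    norm_num
  have hv3 : E 3 = -(3 / 4) * Z 3 := by
    rw [E_val (by omega : 2 ≤ 3)]
    norm_num
  have hv4 : E 4 = -(7 / 8) * Z 4 := by
    rw [E_val (by omega : 2 ≤ 4)]
    norm_num
  have h24 : Z 2 * Z 4 = 7 / 4 * Z 6 := Z_two_mul_Z_four
  rw [hv2] at hE1 hE2
  rw [hv4] at hE2
  rw [hv3] at hE3 hE4
  linear_combination 3 * hE1 - 3 * hE2 - 2 * hE3 - 2 * hE4 + (45 / 16) * h24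
end
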